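/- Let B be an integral domain in which 6 is invertible, and let A be the free B-module with basis {1, t, v₁, v₂, w₁, w₂}, equipped with the S₃-action described in the context. Suppose A carries a commutative, associative B-bilinear multiplication with unit 1 such that every element of S₃ acts as a ring automorphism, and suppose A has no zero divisors (the algebra is integral). Then there exist b₁, b₂, c₁, d₃, d₄, f₃, f₄, h₂ ∈ B satisfying (i) 2b₁d₃ − b₂f₄ + c₁d₄ = 0, (ii) 2b₁f₄ − b₂f₃ + c₁d₃ = 0, and (iii) (b₁² + b₂c₁)h₂ = (3/2)(b₁(d₄f₃ − d₃f₄) + b₂(f₄² − d₃f₃) + c₁(d₄f₄ − d₃²)), such that the multiplication table is: t² = (−3b₁² − 3b₂c₁)·1; t·v₁ = b₁v₁ + b₂v₂ − 2b₁w₁ − 2b₂w₂; t·v₂ = c₁v₁ − b₁v₂ − 2c₁w₁ + 2b₁w₂; t·w₁ = 2b₁v₁ + 2b₂v₂ − b₁w₁ − b₂w₂; t·w₂ = 2c₁v₁ − 2b₁v₂ − c₁w₁ + b₁w₂; v₁² = 6(d₃² − d₄f₄)·1 + d₃v₁ + d₄v₂ − 2d₃w₁ − 2d₄w₂; v₁v₂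 = 3(d₄f₃ − d₃f₄)·1 − f₄v₁ − d₃v₂ + 2f₄w₁ + 2d₃w₂; v₂² = 6(f₄² − d₃f₃)·1 + f₃v₁ + f₄v₂ − 2f₃w₁ − 2f₄w₂; v₁w₁ = 3(d₃² − d₄f₄)·1 − d₃v₁ − d₄v₂ − d₃w₁ − d₄w₂; v₁w₂ = (3/2)(d₄f₃ − d₃f₄)·1 + h₂t + f₄v₁ + d₃v₂ + f₄w₁ + d₃w₂; v₂w₁ = (3/2)(d₄f₃ − d₃f₄)·1 − h₂t + f₄v₁ + d₃v₂ + f₄w₁ + d₃w₂; v₂w₂ = 3(f₄² − d₃f₃)·1 − f₃v₁ − f₄v₂ − f₃w₁ − f₄w₂; w₁² = 6(d₃² − d₄f₄)·1 − 2d₃v₁ − 2d₄v₂ + d₃w₁ + d₄w₂; w₁w₂ = 3(d₄f₃ − d₃f₄)·1 + 2f₄v₁ + 2d₃v₂ − f₄w₁ − d₃w₂; w₂² = 6(f₄² − d₃f₃)·1 − 2f₃v₁ − 2f₄v₂ + f₃w₁ + f₄w₂. -/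

import Mathlib

noncomputable section

/-- A fixed 3-cycle in `S₃ = Equiv.Perm (Fin 3)` (it sends `0 ↦ 1 ↦ 2 ↦ 0`). -/
def σ : Equiv.Perm (Fin 3) := finRotate 3

/-- A fixed transposition in `S₃ = Equiv.Perm (Fin 3)`; it satisfies `τ * σ * τ⁻¹ = σ ^ 2`. -/
def τ : Equiv.Perm (Fin 3) := Equiv.swap 0 1

/-- The standard basis of the free module `A = Fin 6 → B`, with the labelling
`E 0 = 1`, `E 1 = t`, `E 2 = v₁`, `E 3 = v₂`, `E 4 = w₁ (= τv₁)`, `E 5 = w₂ (= τv₂)`. -/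
def E (B : Type*) [CommRing B] (i : Fin 6) : Fin 6 → B := Pi.single i 1


/-!
As a representation, `A = 1 ⊕ sgn ⊕ V ⊗ B²` with `V = ⟨v, w⟩` the standard representation of
`S₃`. Since `6` is invertible, equivariance determines every product of basis vectors up to fifteen
parameters (`MulParams`): multiplication by `t` acts on `V ⊗ B²` as `J ⊗ M` with `J² = -3` and
`M = [[b₁, c₁], [b₂, c₂]]`, and the products inside `V ⊗ B²` are given by a bilinear form, an
alternating form and a commutative product `N` on `B²`.

Associativity, written in structure constants, gives polynomial relations. Among them,
`t (t v) = t² v` says that `M²` is scalar, so `b₂ (b₁ + c₂) = c₁ (b₁ + c₂) = 0` and `b₁² = c₂²`;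
if `tr M ≠ 0`, then `M` is scalar and `t (v₁ v₁) = (t v₁) v₁` forces `v₁² = 0`. The same
dichotomy for the traces `d₃ + b` and `a + f₄` of `N` leads to `v₂² = 0`, or directly to a
contradiction. So integrality makes the three traces vanish, and then the remaining relations
give the table and (i)–(iii).
-/

namespace S3Algebra

variable {B : Type*} [CommRing B]

def σAct (x : Fin 6 → B) : Fin 6 → B := ![x 0, x 1, x 4, x 5, -x 2 - x 4, -x 3 - x 5]

def τAct (x : Fin 6 → B) : Fin 6 → B := ![x 0, -x 1, x 4, x 5, x 2, x 3]

theorem eq_sum_smul_E (x : Fin 6 → B) : x = ∑ i, x i • E B i := pi_eq_sum_univ' x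

theorem apply_eq_σAct (f : (Fin 6 → B) →ₗ[B] (Fin 6 → B))
    (h0 : f (E B 0) = E B 0) (h1 : f (E B 1) = E B 1) (h2 : f (E B 2) = -E B 4)
    (h3 : f (E B 3) = -E B 5) (h4 : f (E B 4) = E B 2 - E B 4) (h5 : f (E B 5) = E B 3 - E B 5)
    (x : Fin 6 → B) : f x = σAct x := by
  rw [eq_sum_smul_E x, map_sum]
  simp only [map_smul, Fin.sum_univ_six, h0, h1, h2, h3, h4, h5]
  funext k
  fin_cases k <;> simp [σAct, E] <;> ring

theorem apply_eq_τAct (f : (Fin 6 → B) →ₗ[B] (Fin 6 → B))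
    (h0 : f (E B 0) = E B 0) (h1 : f (E B 1) = -E B 1) (h2 : f (E B 2) = E B 4)
    (h3 : f (E B 3) = E B 5) (h4 : f (E B 4) = E B 2) (h5 : f (E B 5) = E B 3)
    (x : Fin 6 → B) : f x = τAct x := by
  rw [eq_sum_smul_E x, map_sum]
  simp only [map_smul, Fin.sum_univ_six, h0, h1, h2, h3, h4, h5]
  funext k
  fin_cases k <;> simp [τAct, E]

theorem σAct_E : σAct (E B 1) = E B 1 ∧ σAct (E B 2) = -E B 4 ∧
    σAct (E B 3) = -E B 5 ∧ σAct (E B 4) = E B 2 - E B 4 ∧ σAct (E B 5) = E B 3 - E B 5 := by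
  refine ⟨?_, ?_, ?_, ?_, ?_⟩ <;> funext k <;> fin_cases k <;> simp [σAct, E]

theorem τAct_E : τAct (E B 1) = -E B 1 ∧ τAct (E B 2) = E B 4 ∧
    τAct (E B 3) = E B 5 ∧ τAct (E B 4) = E B 2 ∧ τAct (E B 5) = E B 3 := by
  refine ⟨?_, ?_, ?_, ?_, ?_⟩ <;> funext k <;> fin_cases k <;> simp [τAct, E]

theorem sum_mul_structConst_assoc {ι : Type*} [Fintype ι] [DecidableEq ι]
    (m : (ι → B) →ₗ[B] (ι → B) →ₗ[B] (ι → B)) (hassoc : ∀ x y z, m (m x y) z = m x (m y z))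
    (i j k r : ι) :
    ∑ l, m (Pi.single i 1) (Pi.single j 1) l * m (Pi.single l 1) (Pi.single k 1) r =
      ∑ l, m (Pi.single j 1) (Pi.single k 1) l * m (Pi.single i 1) (Pi.single l 1) r := by
  have h := hassoc (Pi.single i 1) (Pi.single j 1) (Pi.single k 1)
  rw [pi_eq_sum_univ' (m (Pi.single i 1) (Pi.single j 1)),
    pi_eq_sum_univ' (m (Pi.single j 1) (Pi.single k 1))] at h
  simpa [Finset.sum_apply] using congrFun h r

/- Coordinates of the products `t vᵢ`, `t wᵢ`, `vᵢ vⱼ`, `vᵢ wⱼ`, `wᵢ wⱼ` allowed by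
equivariance. -/
def prodTV (α β : B) : Fin 6 → B := ![0, 0, α, β, -2 * α, -2 * β]
def prodTW (α β : B) : Fin 6 → B := ![0, 0, 2 * α, 2 * β, -α, -β]
def prodVV (s α β : B) : Fin 6 → B := ![2 * s, 0, α, β, -2 * α, -2 * β]
def prodVW (s h α β : B) : Fin 6 → B := ![s, h, -α, -β, -α, -β]
def prodWW (s α β : B) : Fin 6 → B := ![2 * s, 0, -2 * α, -2 * β, α, β]

theorem prodVV_eq_zero {s α β : B} (hs : s = 0) (hα : α = 0) (hβ : β = 0) :
    prodVV s α β = 0 := by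
  subst hs hα hβ
  funext k
  fin_cases k <;> simp [prodVV]

structure MulParams (B : Type*) where
  (K b₁ b₂ c₁ c₂ p d₃ d₄ s h a b q f₃ f₄ : B)

namespace MulParams

def table (P : MulParams B) : Fin 6 → Fin 6 → Fin 6 → B :=
  ![![E B 0, E B 1, E B 2, E B 3, E B 4, E B 5],
    ![E B 1, P.K • E B 0, prodTV P.b₁ P.b₂, prodTV P.c₁ P.c₂, prodTW P.b₁ P.b₂, prodTW P.c₁ P.c₂],
    ![E B 2, prodTV P.b₁ P.b₂, prodVV P.p P.d₃ P.d₄, prodVV P.s P.a P.b,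
      prodVW P.p 0 P.d₃ P.d₄, prodVW P.s P.h P.a P.b],
    ![E B 3, prodTV P.c₁ P.c₂, prodVV P.s P.a P.b, prodVV P.q P.f₃ P.f₄,
      prodVW P.s (-P.h) P.a P.b, prodVW P.q 0 P.f₃ P.f₄],
    ![E B 4, prodTW P.b₁ P.b₂, prodVW P.p 0 P.d₃ P.d₄, prodVW P.s (-P.h) P.a P.b,
      prodWW P.p P.d₃ P.d₄, prodWW P.s P.a P.b],
    ![E B 5, prodTW P.c₁ P.c₂, prodVW P.s P.h P.a P.b, prodVW P.q 0 P.f₃ P.f₄,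
      prodWW P.s P.a P.b, prodWW P.q P.f₃ P.f₄]]

def IsAssoc (P : MulParams B) : Prop :=
  ∀ i j k r, ∑ l, P.table i j l * P.table l k r = ∑ l, P.table j k l * P.table i l r

theorem isAssoc_of_eq {m : (Fin 6 → B) →ₗ[B] (Fin 6 → B) →ₗ[B] (Fin 6 → B)}
    (hassoc : ∀ x y z, m (m x y) z = m x (m y z)) {P : MulParams B}
    (hP : ∀ i j, m (E B i) (E B j) = P.table i j) : P.IsAssoc := by
  intro i j k r
  simp only [← hP]
  exact sum_mul_structConst_assoc m hassoc i j k r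

end MulParams

section Invertible6

variable [Invertible (6 : B)]

theorem eq_of_two_mul_eq {x y : B} (h : 2 * x = 2 * y) : x = y := by
  linear_combination 3 * ⅟(6 : B) * h - (x - y) * mul_invOf_self (6 : B)

theorem eq_of_three_mul_eq {x y : B} (h : 3 * x = 3 * y) : x = y := by
  linear_combination 2 * ⅟(6 : B) * h - (x - y) * mul_invOf_self (6 : B)

theorem eq_nine_mul_invOf_six_mul {x y : B} (h : 2 * x = 3 * y) : x = 9 * ⅟(6 : B) * y := by
  linear_combination 3 * ⅟(6 : B) * h - x * mul_invOf_self (6 : B)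

theorem two_mul_nine_mul_invOf_six (x : B) : 2 * (9 * ⅟(6 : B) * x) = 3 * x := by
  linear_combination 3 * x * mul_invOf_self (6 : B)

theorem eq_smul_E_zero_of_invariant {x : Fin 6 → B} (hσ : σAct x = x) (hτ : τAct x = x) :
    x = x 0 • E B 0 := by
  have h2 := congrFun hσ 2
  have h3 := congrFun hσ 3
  have h4 := congrFun hσ 4
  have h5 := congrFun hσ 5
  have h1 := congrFun hτ 1
  simp only [σAct, τAct, Matrix.cons_val] at h1 h2 h3 h4 h5
  funext k
  fin_cases k <;> simp [E]
  · exact eq_of_two_mul_eq (by linear_combination -h1)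
  · exact eq_of_three_mul_eq (by linear_combination -h4 - 2 * h2)
  · exact eq_of_three_mul_eq (by linear_combination -h5 - 2 * h3)
  · exact eq_of_three_mul_eq (by linear_combination -h4 + h2)
  · exact eq_of_three_mul_eq (by linear_combination -h5 + h3)

/-- `x` and `y` play the roles of `t vᵢ` and `t wᵢ`; the signs come from `τ t = -t`. -/
theorem eq_prodTV_of_twisted {x y : Fin 6 → B} (hσx : σAct x = -y) (hτx : τAct x = -y)
    (hσy : σAct y = x - y) : x = prodTV (x 2) (x 3) ∧ y = prodTW (x 2) (x 3) := by
  obtain rfl : y = -σAct x := by rw [hσx, neg_neg]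
  have h0 := congrFun hσy 0
  have h1 := congrFun hτx 1
  have h4 := congrFun hτx 4
  have h5 := congrFun hτx 5
  simp only [σAct, τAct, Matrix.cons_val, Pi.neg_apply, Pi.sub_apply] at h0 h1 h4 h5
  have x0 : x 0 = 0 := eq_of_three_mul_eq (by linear_combination -h0)
  have x1 : x 1 = 0 := eq_of_two_mul_eq (by linear_combination -h1)
  have x4 : x 4 = -2 * x 2 := by linear_combination h4
  have x5 : x 5 = -2 * x 3 := by linear_combination h5
  constructor <;> funext k <;> fin_cases k <;> simp [prodTV, prodTW, σAct, x0, x1, x4, x5] <;> ring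

/-- `P`, `Q`, `Q'`, `R` play the roles of `vᵢ vⱼ`, `vᵢ wⱼ`, `wᵢ vⱼ`, `wᵢ wⱼ`. -/
theorem eq_prodVV_of_equivariant {P Q Q' R : Fin 6 → B} (hσP : σAct P = R) (hτP : τAct P = R)
    (hτQ : τAct Q = Q') (hσQ : σAct Q = R - Q') (hσQ' : σAct Q' = R - Q) :
    P = prodVV (Q 0) (P 2) (P 3) ∧ Q = prodVW (Q 0) (Q 1) (P 2) (P 3) ∧
      Q' = prodVW (Q 0) (-Q 1) (P 2) (P 3) ∧ R = prodWW (Q 0) (P 2) (P 3) := by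
  subst hσP hτQ
  have a1 := congrFun hτP 1
  have a4 := congrFun hτP 4
  have a5 := congrFun hτP 5
  have b0 := congrFun hσQ 0
  have b2 := congrFun hσQ 2
  have b3 := congrFun hσQ 3
  have c2 := congrFun hσQ' 2
  have c3 := congrFun hσQ' 3
  simp only [σAct, τAct, Matrix.cons_val, Pi.sub_apply] at a1 a4 a5 b0 b2 b3 c2 c3
  have P0 : P 0 = 2 * Q 0 := by linear_combination -b0
  have P1 : P 1 = 0 := eq_of_two_mul_eq (by linear_combination -a1)
  have P4 : P 4 = -2 * P 2 := by linear_combination a4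
  have P5 : P 5 = -2 * P 3 := by linear_combination a5
  have Q2 : Q 2 = -P 2 := eq_of_two_mul_eq (by linear_combination c2 + a4)
  have Q3 : Q 3 = -P 3 := eq_of_two_mul_eq (by linear_combination c3 + a5)
  have Q4 : Q 4 = -P 2 := eq_of_two_mul_eq (by linear_combination b2 + a4)
  have Q5 : Q 5 = -P 3 := eq_of_two_mul_eq (by linear_combination b3 + a5)
  refine ⟨?_, ?_, ?_, ?_⟩ <;> funext k <;> fin_cases k <;>
    simp [prodVV, prodVW, prodWW, σAct, τAct, P0, P1, P4, P5, Q2, Q3, Q4, Q5] <;> ring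

theorem eq_prodVV_of_equivariant_of_comm {P Q R : Fin 6 → B} (hσP : σAct P = R)
    (hτP : τAct P = R) (hτQ : τAct Q = Q) (hσQ : σAct Q = R - Q) :
    P = prodVV (Q 0) (P 2) (P 3) ∧ Q = prodVW (Q 0) 0 (P 2) (P 3) ∧
      R = prodWW (Q 0) (P 2) (P 3) := by
  obtain ⟨hP, hQ, hQ', hR⟩ := eq_prodVV_of_equivariant hσP hτP hτQ hσQ hσQ
  have h := congrFun (hQ.symm.trans hQ') 1
  simp only [prodVW, Matrix.cons_val] at h
  have hQ1 : Q 1 = 0 := eq_of_two_mul_eq (by linear_combination h)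
  exact ⟨hP, hQ1 ▸ hQ, hR⟩

theorem exists_mulParams (m : (Fin 6 → B) →ₗ[B] (Fin 6 → B) →ₗ[B] (Fin 6 → B))
    (hone : ∀ x, m (E B 0) x = x) (hcomm : ∀ x y, m x y = m y x)
    (hσ : ∀ x y, σAct (m x y) = m (σAct x) (σAct y))
    (hτ : ∀ x y, τAct (m x y) = m (τAct x) (τAct y)) :
    ∃ P : MulParams B, ∀ i j, m (E B i) (E B j) = P.table i j := by
  obtain ⟨σ1, σ2, σ3, σ4, σ5⟩ := σAct_E (B := B)
  obtain ⟨τ1, τ2, τ3, τ4, τ5⟩ := τAct_E (B := B)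
  have htt := eq_smul_E_zero_of_invariant (x := m (E B 1) (E B 1))
    (by rw [hσ, σ1]) (by simp only [hτ, τ1, map_neg, LinearMap.neg_apply, neg_neg])
  obtain ⟨htv₁, htw₁⟩ := eq_prodTV_of_twisted (x := m (E B 1) (E B 2)) (y := m (E B 1) (E B 4))
    (by simp only [hσ, σ1, σ2, map_neg]) (by simp only [hτ, τ1, τ2, map_neg, LinearMap.neg_apply])
    (by simp only [hσ, σ1, σ4, map_sub])
  obtain ⟨htv₂, htw₂⟩ := eq_prodTV_of_twisted (x := m (E B 1) (E B 3)) (y := m (E B 1) (E B 5))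
    (by simp only [hσ, σ1, σ3, map_neg]) (by simp only [hτ, τ1, τ3, map_neg, LinearMap.neg_apply])
    (by simp only [hσ, σ1, σ5, map_sub])
  obtain ⟨hv₁v₁, hv₁w₁, hw₁w₁⟩ := eq_prodVV_of_equivariant_of_comm (P := m (E B 2) (E B 2))
    (Q := m (E B 2) (E B 4)) (R := m (E B 4) (E B 4))
    (by simp only [hσ, σ2, map_neg, LinearMap.neg_apply, neg_neg]) (by simp only [hτ, τ2])
    (by simp only [hτ, τ2, τ4, hcomm (E B 4)])
    (by simp only [hσ, σ2, σ4, map_neg, map_sub, LinearMap.neg_apply, hcomm (E B 4)]; abel)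
  obtain ⟨hv₂v₂, hv₂w₂, hw₂w₂⟩ := eq_prodVV_of_equivariant_of_comm (P := m (E B 3) (E B 3))
    (Q := m (E B 3) (E B 5)) (R := m (E B 5) (E B 5))
    (by simp only [hσ, σ3, map_neg, LinearMap.neg_apply, neg_neg]) (by simp only [hτ, τ3])
    (by simp only [hτ, τ3, τ5, hcomm (E B 5)])
    (by simp only [hσ, σ3, σ5, map_neg, map_sub, LinearMap.neg_apply, hcomm (E B 5)]; abel)
  obtain ⟨hv₁v₂, hv₁w₂, hw₁v₂, hw₁w₂⟩ := eq_prodVV_of_equivariant (P := m (E B 2) (E B 3))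
    (Q := m (E B 2) (E B 5)) (Q' := m (E B 4) (E B 3)) (R := m (E B 4) (E B 5))
    (by simp only [hσ, σ2, σ3, map_neg, LinearMap.neg_apply, neg_neg]) (by simp only [hτ, τ2, τ3])
    (by simp only [hτ, τ2, τ5])
    (by simp only [hσ, σ2, σ5, map_neg, map_sub, LinearMap.neg_apply]; abel)
    (by simp only [hσ, σ3, σ4, map_neg, map_sub, LinearMap.sub_apply]; abel)
  refine ⟨⟨m (E B 1) (E B 1) 0, m (E B 1) (E B 2) 2, m (E B 1) (E B 2) 3, m (E B 1) (E B 3) 2,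
    m (E B 1) (E B 3) 3, m (E B 2) (E B 4) 0, m (E B 2) (E B 2) 2, m (E B 2) (E B 2) 3,
    m (E B 2) (E B 5) 0, m (E B 2) (E B 5) 1, m (E B 2) (E B 3) 2, m (E B 2) (E B 3) 3,
    m (E B 3) (E B 5) 0, m (E B 3) (E B 3) 2, m (E B 3) (E B 3) 3⟩, fun i j => ?_⟩
  fin_cases i <;> fin_cases j <;>
    first
    | assumption
    | exact hone _
    | (rw [hcomm]; first | assumption | exact hone _)

end Invertible6

namespace MulParams

variable [Invertible (6 : B)] {P : MulParams B}

/- `hc i j k r` is coordinate `r` of `(E i * E j) * E k = E i * (E j * E k)`; the suffixes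
`ttv`, `tvv`, `vvv` say which kinds of basis vectors the triples involve. -/

theorem IsAssoc.relations_ttv (hc : P.IsAssoc) :
    P.K = -3 * (P.b₁ ^ 2 + P.b₂ * P.c₁) ∧ P.K = -3 * (P.b₂ * P.c₁ + P.c₂ ^ 2) ∧
      P.b₂ * (P.b₁ + P.c₂) = 0 ∧ P.c₁ * (P.b₁ + P.c₂) = 0 := by
  obtain ⟨K, b₁, b₂, c₁, c₂, p, d₃, d₄, s, h, a, b, q, f₃, f₄⟩ := P
  have e1122 := hc 1 1 2 2
  have e1123 := hc 1 1 2 3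
  have e1132 := hc 1 1 3 2
  have e1133 := hc 1 1 3 3
  simp only [table, E, prodTV, prodTW, prodVV, prodVW, prodWW, Fin.sum_univ_six, Matrix.cons_val,
    Pi.single_apply, Pi.smul_apply, smul_eq_mul, Fin.reduceEq, ↓reduceIte]
    at e1122 e1123 e1132 e1133
  refine ⟨?_, ?_, ?_, ?_⟩
  · linear_combination e1122
  · linear_combination e1133
  · exact eq_of_three_mul_eq (by linear_combination e1123)
  · exact eq_of_three_mul_eq (by linear_combination e1132)

theorem IsAssoc.relations_tvv (hc : P.IsAssoc) :
    P.p = -(P.b₂ * P.h) ∧ P.s = P.b₁ * P.h ∧ P.q = P.c₁ * P.h ∧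
      2 * P.b₁ * P.d₃ + P.b₂ * P.a + P.c₁ * P.d₄ = 0 ∧
      P.b₁ * P.d₄ + P.b₂ * (P.b + P.d₃) + P.c₂ * P.d₄ = 0 ∧
      2 * P.b₁ * P.a + P.b₂ * P.f₃ + P.c₁ * P.b = 0 := by
  obtain ⟨K, b₁, b₂, c₁, c₂, p, d₃, d₄, s, h, a, b, q, f₃, f₄⟩ := P
  have e1221 := hc 1 2 2 1
  have e1231 := hc 1 2 3 1
  have e1331 := hc 1 3 3 1
  have e1222 := hc 1 2 2 2
  have e1223 := hc 1 2 2 3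
  have e1232 := hc 1 2 3 2
  simp only [table, E, prodTV, prodTW, prodVV, prodVW, prodWW, Fin.sum_univ_six, Matrix.cons_val,
    Pi.single_apply, Pi.smul_apply, smul_eq_mul, Fin.reduceEq, ↓reduceIte]
    at e1221 e1231 e1331 e1222 e1223 e1232
  refine ⟨?_, ?_, ?_, ?_, ?_, ?_⟩
  · exact eq_of_two_mul_eq (by linear_combination -e1221)
  · exact eq_of_two_mul_eq (by linear_combination -e1231)
  · exact eq_of_two_mul_eq (by linear_combination -e1331)
  · exact eq_of_three_mul_eq (by linear_combination e1222)
  · exact eq_of_three_mul_eq (by linear_combination e1223)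
  · exact eq_of_three_mul_eq (by linear_combination e1232)

theorem IsAssoc.relations_vvv (hc : P.IsAssoc) :
    P.p = 3 * (P.d₃ ^ 2 + P.a * P.d₄) ∧ P.p = 3 * (P.a * P.d₄ + P.b ^ 2) ∧
      P.q = 3 * (P.a ^ 2 + P.b * P.f₃) ∧ P.q = 3 * (P.b * P.f₃ + P.f₄ ^ 2) ∧
      P.s + P.b₁ * P.h = 3 * (P.d₃ * P.a + P.d₄ * P.f₃) ∧
      P.h * (P.d₃ + P.b) = 0 ∧ P.d₄ * (P.d₃ + P.b) = 0 ∧ P.a * (P.d₃ + P.b) = 0 ∧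
      P.h * (P.a + P.f₄) = 0 ∧ P.b * (P.a + P.f₄) = 0 := by
  obtain ⟨K, b₁, b₂, c₁, c₂, p, d₃, d₄, s, h, a, b, q, f₃, f₄⟩ := P
  have e2242 := hc 2 2 4 2
  have e2455 := hc 2 4 5 5
  have e2352 := hc 2 3 5 2
  have e3353 := hc 3 3 5 3
  have e2252 := hc 2 2 5 2
  have e2231 := hc 2 2 3 1
  have e2243 := hc 2 2 4 3
  have e2454 := hc 2 4 5 4
  have e2331 := hc 2 3 3 1
  have e2353 := hc 2 3 5 3
  simp only [table, E, prodTV, prodVV, prodVW, prodWW, Fin.sum_univ_six, Matrix.cons_val,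
    Pi.single_apply, Fin.reduceEq, ↓reduceIte]
    at e2242 e2455 e2352 e3353 e2252 e2231 e2243 e2454 e2331 e2353
  refine ⟨?_, ?_, ?_, ?_, ?_, ?_, ?_, ?_, ?_, ?_⟩
  · linear_combination -e2242
  · linear_combination e2455
  · linear_combination -e2352
  · linear_combination -e3353
  · linear_combination -e2252
  · exact eq_of_two_mul_eq (by linear_combination e2231)
  · exact eq_of_three_mul_eq (by linear_combination e2243)
  · exact eq_of_three_mul_eq (by linear_combination -e2454)
  · exact eq_of_two_mul_eq (by linear_combination e2331)
  · exact eq_of_three_mul_eq (by linear_combination e2353)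

def normal (b₁ b₂ c₁ d₃ d₄ f₃ f₄ h : B) : MulParams B :=
  ⟨-3 * b₁ ^ 2 - 3 * b₂ * c₁, b₁, b₂, c₁, -b₁, 3 * (d₃ ^ 2 - d₄ * f₄), d₃, d₄,
    9 * ⅟(6 : B) * (d₄ * f₃ - d₃ * f₄), h, -f₄, -d₃, 3 * (f₄ ^ 2 - d₃ * f₃), f₃, f₄⟩

variable [IsDomain B]

theorem IsAssoc.c₂_eq_neg_b₁ (hc : P.IsAssoc) (hv₁ : P.table 2 2 ≠ 0) : P.c₂ = -P.b₁ := by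
  obtain ⟨hK, hK', hb₂, hc₁⟩ := hc.relations_ttv
  obtain ⟨hp, -, -, hd₃, hd₄, -⟩ := hc.relations_tvv
  by_contra hne
  have htr : P.b₁ + P.c₂ ≠ 0 := fun h => hne (by linear_combination h)
  have b₂0 : P.b₂ = 0 := (mul_eq_zero.mp hb₂).resolve_right htr
  have c₁0 : P.c₁ = 0 := (mul_eq_zero.mp hc₁).resolve_right htr
  have hsq : (P.c₂ - P.b₁) * (P.b₁ + P.c₂) = 0 :=
    eq_of_three_mul_eq (by linear_combination hK' - hK)
  have hc₂ : P.c₂ = P.b₁ := sub_eq_zero.mp ((mul_eq_zero.mp hsq).resolve_right htr)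
  have b₁0 : P.b₁ ≠ 0 := fun h => htr (by linear_combination 2 * h + hc₂)
  refine hv₁ (prodVV_eq_zero (by rw [hp, b₂0, zero_mul, neg_zero]) ?_ ?_)
  · refine (mul_eq_zero.mp (?_ : P.b₁ * P.d₃ = 0)).resolve_left b₁0
    exact eq_of_two_mul_eq (by linear_combination hd₃ - P.a * b₂0 - P.d₄ * c₁0)
  · refine (mul_eq_zero.mp (?_ : P.b₁ * P.d₄ = 0)).resolve_left b₁0
    exact eq_of_two_mul_eq (by linear_combination hd₄ - (P.b + P.d₃) * b₂0 - P.d₄ * hc₂)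

theorem IsAssoc.b_eq_neg_d₃ (hc : P.IsAssoc) (hv₂ : P.table 3 3 ≠ 0) : P.b = -P.d₃ := by
  obtain ⟨hp, hp', hq, -, -, hh, hd₄, ha, -, hb⟩ := hc.relations_vvv
  obtain ⟨-, -, hq', -, -, -⟩ := hc.relations_tvv
  by_contra hne
  have hsum : P.d₃ + P.b ≠ 0 := fun h => hne (by linear_combination h)
  have h0 : P.h = 0 := (mul_eq_zero.mp hh).resolve_right hsum
  have d₄0 : P.d₄ = 0 := (mul_eq_zero.mp hd₄).resolve_right hsum
  have a0 : P.a = 0 := (mul_eq_zero.mp ha).resolve_right hsum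
  have hsq : (P.d₃ - P.b) * (P.d₃ + P.b) = 0 :=
    eq_of_three_mul_eq (by linear_combination hp' - hp)
  have hbd : P.b = P.d₃ := (sub_eq_zero.mp ((mul_eq_zero.mp hsq).resolve_right hsum)).symm
  have b0 : P.b ≠ 0 := fun h => hsum (by linear_combination 2 * h - hbd)
  have q0 : P.q = 0 := by rw [hq', h0, mul_zero]
  refine hv₂ (prodVV_eq_zero q0 ?_ ?_)
  · refine (mul_eq_zero.mp (?_ : P.b * P.f₃ = 0)).resolve_left b0
    exact eq_of_three_mul_eq (by linear_combination q0 - hq - 3 * P.a * a0)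
  · have := (mul_eq_zero.mp hb).resolve_left b0
    linear_combination this - a0

theorem IsAssoc.a_eq_neg_f₄ (hc : P.IsAssoc) : P.a = -P.f₄ := by
  obtain ⟨-, -, hq, hq', -, -, -, -, hh, hb⟩ := hc.relations_vvv
  obtain ⟨-, -, hq'', -, -, -⟩ := hc.relations_tvv
  by_contra hne
  have hsum : P.a + P.f₄ ≠ 0 := fun h => hne (by linear_combination h)
  have h0 : P.h = 0 := (mul_eq_zero.mp hh).resolve_right hsum
  have b0 : P.b = 0 := (mul_eq_zero.mp hb).resolve_right hsum
  have q0 : P.q = 0 := by rw [hq'', h0, mul_zero]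
  have a0 : P.a = 0 := (pow_eq_zero_iff two_ne_zero).mp <|
    eq_of_three_mul_eq (by linear_combination q0 - hq - 3 * P.f₃ * b0)
  have f₄0 : P.f₄ = 0 := (pow_eq_zero_iff two_ne_zero).mp <|
    eq_of_three_mul_eq (by linear_combination q0 - hq' - 3 * P.f₃ * b0)
  exact hne (by rw [a0, f₄0, neg_zero])

theorem IsAssoc.eq_normal (hc : P.IsAssoc) (hv₁ : P.table 2 2 ≠ 0) (hv₂ : P.table 3 3 ≠ 0) :
    P = normal P.b₁ P.b₂ P.c₁ P.d₃ P.d₄ P.f₃ P.f₄ P.h := by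
  have hc₂ := hc.c₂_eq_neg_b₁ hv₁
  have hb := hc.b_eq_neg_d₃ hv₂
  have ha := hc.a_eq_neg_f₄
  obtain ⟨hK, -, -, -⟩ := hc.relations_ttv
  obtain ⟨-, hs, -, -, -, -⟩ := hc.relations_tvv
  obtain ⟨hp, -, -, hq, hs', -⟩ := hc.relations_vvv
  obtain ⟨K, b₁, b₂, c₁, c₂, p, d₃, d₄, s, h, a, b, q, f₃, f₄⟩ := P
  dsimp only at *
  subst hc₂ hb ha
  unfold normal
  congr 1
  · linear_combination hK
  · linear_combination hp
  · exact eq_nine_mul_invOf_six_mul (by linear_combination hs + hs')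
  · linear_combination hq

theorem IsAssoc.relations (hc : P.IsAssoc) (hv₁ : P.table 2 2 ≠ 0) (hv₂ : P.table 3 3 ≠ 0) :
    2 * P.b₁ * P.d₃ - P.b₂ * P.f₄ + P.c₁ * P.d₄ = 0 ∧
      2 * P.b₁ * P.f₄ - P.b₂ * P.f₃ + P.c₁ * P.d₃ = 0 ∧
      (P.b₁ ^ 2 + P.b₂ * P.c₁) * P.h = 9 * ⅟(6 : B) * (P.b₁ * (P.d₄ * P.f₃ - P.d₃ * P.f₄) +
        P.b₂ * (P.f₄ ^ 2 - P.d₃ * P.f₃) + P.c₁ * (P.d₄ * P.f₄ - P.d₃ ^ 2)) := by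
  have hc₂ := hc.c₂_eq_neg_b₁ hv₁
  have hb := hc.b_eq_neg_d₃ hv₂
  have ha := hc.a_eq_neg_f₄
  obtain ⟨hp, hs, hq, hd, -, hf⟩ := hc.relations_tvv
  obtain ⟨hp', -, -, hq', hs', -⟩ := hc.relations_vvv
  obtain ⟨K, b₁, b₂, c₁, c₂, p, d₃, d₄, s, h, a, b, q, f₃, f₄⟩ := P
  dsimp only at *
  subst hc₂ hb ha
  refine ⟨by linear_combination hd, by linear_combination -hf, eq_nine_mul_invOf_six_mul ?_⟩
  linear_combination b₁ * (hs' - hs) + b₂ * (hq' - hq) + c₁ * (hp - hp')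

end MulParams

end S3Algebra

open S3Algebra

theorem statement0 (B : Type*) [CommRing B] [IsDomain B] [Invertible (6 : B)]
    (ρ : Equiv.Perm (Fin 3) →* ((Fin 6 → B) ≃ₗ[B] (Fin 6 → B)))
    (hσ0 : ρ σ (E B 0) = E B 0)
    (hσt : ρ σ (E B 1) = E B 1)
    (hσv1 : ρ σ (E B 2) = -E B 4)
    (hσv2 : ρ σ (E B 3) = -E B 5)
    (hσw1 : ρ σ (E B 4) = E B 2 - E B 4)
    (hσw2 : ρ σ (E B 5) = E B 3 - E B 5)
    (hτ0 : ρ τ (E B 0) = E B 0)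
    (hτt : ρ τ (E B 1) = -E B 1)
    (hτv1 : ρ τ (E B 2) = E B 4)
    (hτv2 : ρ τ (E B 3) = E B 5)
    (hτw1 : ρ τ (E B 4) = E B 2)
    (hτw2 : ρ τ (E B 5) = E B 3)
    (m : (Fin 6 → B) →ₗ[B] (Fin 6 → B) →ₗ[B] (Fin 6 → B))
    (hone : ∀ x, m (E B 0) x = x)
    (hcomm : ∀ x y, m x y = m y x)
    (hassoc : ∀ x y z, m (m x y) z = m x (m y z))
    (hequiv : ∀ (g : Equiv.Perm (Fin 3)) (x y : Fin 6 → B),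
      ρ g (m x y) = m (ρ g x) (ρ g y))
    (hintegral : ∀ x y : Fin 6 → B, m x y = 0 → x = 0 ∨ y = 0) :
    ∃ b₁ b₂ c₁ d₃ d₄ f₃ f₄ h₂ : B,
      (2 * b₁ * d₃ - b₂ * f₄ + c₁ * d₄ = 0) ∧
      (2 * b₁ * f₄ - b₂ * f₃ + c₁ * d₃ = 0) ∧
      ((b₁ ^ 2 + b₂ * c₁) * h₂ =
        (9 * ⅟(6 : B)) *
          (b₁ * (d₄ * f₃ - d₃ * f₄) + b₂ * (f₄ ^ 2 - d₃ * f₃) +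
            c₁ * (d₄ * f₄ - d₃ ^ 2))) ∧
      m (E B 1) (E B 1) = (-3 * b₁ ^ 2 - 3 * b₂ * c₁) • E B 0 ∧
      m (E B 1) (E B 2) =
        b₁ • E B 2 + b₂ • E B 3 - (2 * b₁) • E B 4 - (2 * b₂) • E B 5 ∧
      m (E B 1) (E B 3) =
        c₁ • E B 2 - b₁ • E B 3 - (2 * c₁) • E B 4 + (2 * b₁) • E B 5 ∧
      m (E B 1) (E B 4) =
        (2 * b₁) • E B 2 + (2 * b₂) • E B 3 - b₁ • E B 4 - b₂ • E B 5 ∧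
      m (E B 1) (E B 5) =
        (2 * c₁) • E B 2 - (2 * b₁) • E B 3 - c₁ • E B 4 + b₁ • E B 5 ∧
      m (E B 2) (E B 2) =
        (6 * (d₃ ^ 2 - d₄ * f₄)) • E B 0 + d₃ • E B 2 + d₄ • E B 3 -
          (2 * d₃) • E B 4 - (2 * d₄) • E B 5 ∧
      m (E B 2) (E B 3) =
        (3 * (d₄ * f₃ - d₃ * f₄)) • E B 0 - f₄ • E B 2 - d₃ • E B 3 +
          (2 * f₄) • E B 4 + (2 * d₃) • E B 5 ∧
      m (E B 3) (E B 3) =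
        (6 * (f₄ ^ 2 - d₃ * f₃)) • E B 0 + f₃ • E B 2 + f₄ • E B 3 -
          (2 * f₃) • E B 4 - (2 * f₄) • E B 5 ∧
      m (E B 2) (E B 4) =
        (3 * (d₃ ^ 2 - d₄ * f₄)) • E B 0 - d₃ • E B 2 - d₄ • E B 3 -
          d₃ • E B 4 - d₄ • E B 5 ∧
      m (E B 2) (E B 5) =
        ((9 * ⅟(6 : B)) * (d₄ * f₃ - d₃ * f₄)) • E B 0 + h₂ • E B 1 +
          f₄ • E B 2 + d₃ • E B 3 + f₄ • E B 4 + d₃ • E B 5 ∧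
      m (E B 3) (E B 4) =
        ((9 * ⅟(6 : B)) * (d₄ * f₃ - d₃ * f₄)) • E B 0 - h₂ • E B 1 +
          f₄ • E B 2 + d₃ • E B 3 + f₄ • E B 4 + d₃ • E B 5 ∧
      m (E B 3) (E B 5) =
        (3 * (f₄ ^ 2 - d₃ * f₃)) • E B 0 - f₃ • E B 2 - f₄ • E B 3 -
          f₃ • E B 4 - f₄ • E B 5 ∧
      m (E B 4) (E B 4) =
        (6 * (d₃ ^ 2 - d₄ * f₄)) • E B 0 - (2 * d₃) • E B 2 - (2 * d₄) • E B 3 +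
          d₃ • E B 4 + d₄ • E B 5 ∧
      m (E B 4) (E B 5) =
        (3 * (d₄ * f₃ - d₃ * f₄)) • E B 0 + (2 * f₄) • E B 2 + (2 * d₃) • E B 3 -
          f₄ • E B 4 - d₃ • E B 5 ∧
      m (E B 5) (E B 5) =
        (6 * (f₄ ^ 2 - d₃ * f₃)) • E B 0 - (2 * f₃) • E B 2 - (2 * f₄) • E B 3 +
          f₃ • E B 4 + f₄ • E B 5
 := by
  have hσm : ∀ x y, σAct (m x y) = m (σAct x) (σAct y) := by
    have hρ : ∀ x, ρ σ x = σAct x := apply_eq_σAct (ρ σ).toLinearMap hσ0 hσt hσv1 hσv2 hσw1 hσw2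
    intro x y
    simpa only [hρ] using hequiv σ x y
  have hτm : ∀ x y, τAct (m x y) = m (τAct x) (τAct y) := by
    have hρ : ∀ x, ρ τ x = τAct x := apply_eq_τAct (ρ τ).toLinearMap hτ0 hτt hτv1 hτv2 hτw1 hτw2
    intro x y
    simpa only [hρ] using hequiv τ x y
  obtain ⟨P, hP⟩ := exists_mulParams m hone hcomm hσm hτm
  have hc : P.IsAssoc := MulParams.isAssoc_of_eq hassoc hP
  have hsq : ∀ i, P.table i i ≠ 0 := fun i h => by
    rw [← hP] at h
    rcases hintegral _ _ h with h | h <;> exact one_ne_zero (Pi.single_eq_zero_iff.mp h)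
  obtain ⟨h₁, h₂, h₃⟩ := hc.relations (hsq 2) (hsq 3)
  rw [hc.eq_normal (hsq 2) (hsq 3)] at hP
  refine ⟨P.b₁, P.b₂, P.c₁, P.d₃, P.d₄, P.f₃, P.f₄, P.h, h₁, h₂, h₃, ?_⟩
  simp only [hP]
  refine ⟨?_, ?_, ?_, ?_, ?_, ?_, ?_, ?_, ?_, ?_, ?_, ?_, ?_, ?_, ?_⟩ <;>
    funext k <;> fin_cases k <;>
    simp [MulParams.table, MulParams.normal, prodTV, prodTW, prodVV, prodVW, prodWW, E,
      two_mul_nine_mul_invOf_six] <;> ring
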